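/- For the weight W with entries W(x)_{nm} = √(1-x²) ∑_{t=0}^{m} α_t(m,n) U_{n+m-2t}(x) (m ≤ n), one has (H_0)_{nm} = ∫_{-1}^{1} W(x)_{nm} dx = δ_{nm} (π/2) (2ℓ+1)²/((n+1)(2ℓ-n+1)). -/

import Mathlib

open Matrix


/-- Pochhammer symbol (rising factorial) `(a)_k`. -/
noncomputable def poch (a : ℝ) (k : ℕ) : ℝ := ∏ i ∈ Finset.range k, (a + i)

/-- Gegenbauer polynomial `C_n^{(α)}(x)`. -/
noncomputable def Geg (α : ℝ) (n : ℕ) (x : ℝ) : ℝ :=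
  (poch (2*α) n / (Nat.factorial n : ℝ)) *
    ∑ j ∈ Finset.range (n+1),
      poch (-(n:ℝ)) j * poch ((n:ℝ) + 2*α) j / (poch (α + 1/2) j * (Nat.factorial j : ℝ))
        * ((1-x)/2)^j

/-- Chebyshev polynomial of the second kind. -/
noncomputable def ChebU (r : ℕ) (x : ℝ) : ℝ :=
  ((r:ℝ)+1) * ∑ j ∈ Finset.range (r+1),
      poch (-(r:ℝ)) j * poch ((r:ℝ)+2) j / (poch (3/2) j * (Nat.factorial j : ℝ))
        * ((1-x)/2)^j

/-- The coefficient `α_t(m,n)` of the weight, with `L = 2ℓ`. -/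
noncomputable def alphaCoef (L m n t : ℕ) : ℝ :=
  (((L:ℝ)+1)/((n:ℝ)+1)) * ((Nat.factorial (L-m) : ℝ) * (Nat.factorial m : ℝ)
      / (Nat.factorial L : ℝ))
    * (-1)^(m-t) * (poch ((n:ℝ)-L) (m-t) / poch ((n:ℝ)+2) (m-t))
    * (poch ((L:ℝ)+2-t) t / (Nat.factorial t : ℝ))

/-- The `(n,m)` entry of the weight for `m ≤ n`. -/
noncomputable def Wentry (L : ℕ) (x : ℝ) (n m : ℕ) : ℝ :=
  Real.sqrt (1-x^2) * ∑ t ∈ Finset.range (m+1), alphaCoef L m n t * ChebU (n+m-2*t) x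

/-- The matrix weight `W(x)`, symmetric, with `L = 2ℓ`. -/
noncomputable def Wmat (L : ℕ) (x : ℝ) : Matrix (Fin (L+1)) (Fin (L+1)) ℝ :=
  Matrix.of fun n m => if (m:ℕ) ≤ (n:ℕ) then Wentry L x (n:ℕ) (m:ℕ) else Wentry L x (m:ℕ) (n:ℕ)

/-! The hypergeometric series defining `ChebU r` is the Chebyshev polynomial `U_r`: in the
variable `u = (1 - x)/2` its coefficients are `(-4)^j C(r+j+1, 2j+1)`, and Pascal's rule turns
the three-term recurrence of `U_r` into an identity between these coefficients.
Since `(1 - x²) U_r = (T_r - T_{r+2})/2`, the integral of `√(1 - x²) U_r` over `[-1, 1]` is an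
integral of Chebyshev `T` polynomials against the Chebyshev measure, which is `π/2` for `r = 0`
and `0` otherwise. In the entry `(n, m)` with `m ≤ n` the index `n + m - 2t` vanishes only for
`t = m = n`, so only `α_n(n, n) π/2` survives. -/

open Polynomial
open scoped Nat

lemma poch_eq_eval_ascPochhammer (a : ℝ) (k : ℕ) : poch a k = (ascPochhammer ℝ k).eval a := by
  induction k with
  | zero => simp [poch]
  | succ k ih => rw [poch, Finset.prod_range_succ, ← poch, ih, ascPochhammer_succ_eval]

lemma poch_neg_natCast (r k : ℕ) : poch (-(r : ℝ)) k = (-1) ^ k * r.descFactorial k := by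
  rw [poch_eq_eval_ascPochhammer, ascPochhammer_eval_neg_eq_descPochhammer,
    descPochhammer_eval_eq_descFactorial]

lemma poch_natCast (n k : ℕ) : poch n k = n.ascFactorial k := by
  rw [poch_eq_eval_ascPochhammer, ascPochhammer_nat_eq_natCast_ascFactorial]

lemma two_pow_mul_poch_three_halves (k : ℕ) : 2 ^ k * poch (3 / 2) k = (2 * k + 1)‼ := by
  induction k with
  | zero => simp [poch]
  | succ k ih =>
    rw [poch, Finset.prod_range_succ, ← poch, show 2 * (k + 1) + 1 = 2 * k + 1 + 2 by ring,
      Nat.doubleFactorial_add_two]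
    push_cast
    rw [← ih]
    ring

lemma descFactorial_two_mul_add_one (r j : ℕ) :
    (r + j + 1).descFactorial (2 * j + 1)
      = (r + 1) * r.descFactorial j * (r + 2).ascFactorial j := by
  rw [← Nat.descFactorial_mul_descFactorial (k := j) (by omega),
    show r + j + 1 - j = r + 1 by omega, show 2 * j + 1 - j = j + 1 by omega,
    Nat.succ_descFactorial_succ, mul_comm,
    show r + j + 1 = r + 1 + j by ring, Nat.add_descFactorial_eq_ascFactorial]
  ring

lemma chebU_coeff_eq_choose (r j : ℕ) :
    ((r : ℝ) + 1) * (poch (-(r : ℝ)) j * poch ((r : ℝ) + 2) j / (poch (3 / 2) j * (j ! : ℝ)))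
      = (-4) ^ j * (r + j + 1).choose (2 * j + 1) := by
  have hpoch : poch (3 / 2) j = (2 * j + 1)‼ / 2 ^ j := by
    rw [← two_pow_mul_poch_three_halves]; field_simp
  have hchoose := Nat.descFactorial_eq_factorial_mul_choose (r + j + 1) (2 * j + 1)
  rw [descFactorial_two_mul_add_one, Nat.factorial_eq_mul_doubleFactorial,
    Nat.doubleFactorial_two_mul] at hchoose
  have hcast : ((r : ℝ) + 2) = ((r + 2 : ℕ) : ℝ) := by push_cast; ring
  rw [hpoch, poch_neg_natCast, hcast, poch_natCast]
  have h1 : ((2 * j + 1)‼ : ℝ) ≠ 0 := by positivity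
  have h2 : (j ! : ℝ) ≠ 0 := by positivity
  rw [show (-4 : ℝ) ^ j = (-1) ^ j * 2 ^ j * 2 ^ j by rw [← mul_pow, ← mul_pow]; norm_num]
  field_simp
  rw [← mul_assoc] at hchoose
  exact_mod_cast hchoose

/-- The polynomial `u ↦ U_r(1 - 2u)`, given by its hypergeometric coefficients. -/
noncomputable def chebyshevUShifted (r : ℕ) : ℝ[X] :=
  ∑ j ∈ Finset.range (r + 1), C ((-4 : ℝ) ^ j * (r + j + 1).choose (2 * j + 1)) * X ^ j

lemma coeff_chebyshevUShifted (r j : ℕ) :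
    (chebyshevUShifted r).coeff j = (-4 : ℝ) ^ j * (r + j + 1).choose (2 * j + 1) := by
  simp only [chebyshevUShifted, finsetSum_coeff, coeff_C_mul_X_pow, Finset.sum_ite_eq,
    Finset.mem_range]
  split_ifs with hj
  · rfl
  · rw [Nat.choose_eq_zero_of_lt (by omega), Nat.cast_zero, mul_zero]

lemma chebyshevUShifted_add_two (r : ℕ) :
    chebyshevUShifted (r + 2)
      = (2 - 4 * X) * chebyshevUShifted (r + 1) - chebyshevUShifted r := by
  ext j
  rw [sub_mul, mul_assoc, coeff_sub, coeff_sub, coeff_ofNat_mul, coeff_ofNat_mul]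
  cases j with
  | zero =>
    simp only [coeff_X_mul_zero, coeff_chebyshevUShifted, Nat.mul_zero, Nat.zero_add, add_zero,
      Nat.choose_one_right]
    push_cast
    ring
  | succ j =>
    simp only [coeff_X_mul, coeff_chebyshevUShifted]
    have pascal : (r + j + 4).choose (2 * j + 3) + (r + j + 2).choose (2 * j + 3)
        = 2 * (r + j + 3).choose (2 * j + 3) + (r + j + 2).choose (2 * j + 1) := by
      simp only [show r + j + 4 = (r + j + 2) + 1 + 1 by ring,
        show r + j + 3 = (r + j + 2) + 1 by ring, show 2 * j + 3 = (2 * j + 1) + 1 + 1 by ring,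
        Nat.choose_succ_succ']
      ring
    rw [show r + 2 + (j + 1) + 1 = r + j + 4 by ring,
      show r + 1 + (j + 1) + 1 = r + j + 3 by ring, show r + 1 + j + 1 = r + j + 2 by ring,
      show r + (j + 1) + 1 = r + j + 2 by ring,
      show 2 * (j + 1) + 1 = 2 * j + 3 by ring]
    have hpascal := congrArg (Nat.cast : ℕ → ℝ) pascal
    push_cast at hpascal
    linear_combination (-4 : ℝ) ^ (j + 1) * hpascal

lemma eval_chebyshevUShifted (r : ℕ) (u : ℝ) :
    (chebyshevUShifted r).eval u = (Chebyshev.U ℝ r).eval (1 - 2 * u) := by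
  induction r using Nat.twoStepInduction with
  | zero => simp [chebyshevUShifted]
  | one =>
    norm_num [chebyshevUShifted, Finset.sum_range_succ, Chebyshev.U_one]
    ring
  | more r ih₀ ih₁ =>
    rw [chebyshevUShifted_add_two, eval_sub, eval_mul, ih₀, ih₁,
      show ((r + 2 : ℕ) : ℤ) = r + 2 by push_cast; ring, Chebyshev.U_add_two]
    simp only [eval_sub, eval_mul, eval_X, eval_ofNat, Nat.cast_add, Nat.cast_one]
    ring

lemma chebU_eq_eval_U (r : ℕ) (x : ℝ) : ChebU r x = (Chebyshev.U ℝ r).eval x := by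
  have hyper : ChebU r x = (chebyshevUShifted r).eval ((1 - x) / 2) := by
    rw [ChebU, Finset.mul_sum, chebyshevUShifted, eval_finsetSum]
    refine Finset.sum_congr rfl fun j _ => ?_
    rw [eval_C_mul, eval_X_pow, ← chebU_coeff_eq_choose]
    ring
  rw [hyper, eval_chebyshevUShifted]
  ring_nf

open Real MeasureTheory Chebyshev in
lemma integral_sqrt_one_sub_sq_mul_eval_U (r : ℕ) :
    ∫ x in (-1 : ℝ)..1, √(1 - x ^ 2) * (U ℝ r).eval x = if r = 0 then π / 2 else 0 := by
  have hT (x : ℝ) : √(1 - x ^ 2) * (U ℝ r).eval x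
      = ((T ℝ r).eval x - (T ℝ (r + 2)).eval x) / 2 * √(1 - x ^ 2)⁻¹ := by
    have hU := congrArg (eval x) (one_sub_X_sq_mul_U_eq_pol_in_T ℝ r)
    have hT₂ := congrArg (eval x) (T_add_two ℝ r)
    simp only [eval_mul, eval_sub, eval_pow, eval_X, eval_one, eval_ofNat] at hU hT₂
    -- `√a = a / √a` holds for every real `a`, even where `1 - x ^ 2 ≤ 0`
    nth_rw 1 [← Real.div_sqrt]
    rw [Real.sqrt_inv, div_eq_mul_inv]
    linear_combination (√(1 - x ^ 2))⁻¹ * (hU - hT₂ / 2)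
  have hint (n : ℤ) : Integrable (fun x ↦ (T ℝ n).eval x) measureT :=
    integrable_measureT (T ℝ n).continuous.continuousOn
  simp_rw [hT]
  rw [← integral_measureT, integral_div, integral_sub (hint _) (hint _),
    integral_eval_T_real_measureT_of_ne_zero (n := r + 2) (by omega)]
  split_ifs with hr
  · rw [hr, Nat.cast_zero, integral_eval_T_real_measureT_zero]
    ring
  · rw [integral_eval_T_real_measureT_of_ne_zero (by exact_mod_cast hr)]; simp

lemma alphaCoef_diag {L n : ℕ} (hn : n ≤ L) :
    alphaCoef L n n n = ((L : ℝ) + 1) ^ 2 / (((n : ℝ) + 1) * ((L : ℝ) - (n : ℝ) + 1)) := by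
  have hcast : (L : ℝ) + 2 - n = ((L - n + 1 + 1 : ℕ) : ℝ) := by
    push_cast [Nat.cast_sub hn]; ring
  have hasc : ((L - n + 1 + 1).ascFactorial n : ℝ) = (L + 1)! / (L - n + 1)! := by
    have h := (L - n + 1).factorial_mul_ascFactorial n
    rw [show L - n + 1 + n = L + 1 by omega] at h
    rw [eq_div_iff (by positivity), mul_comm]
    exact_mod_cast h
  have hLn : (L : ℝ) - n + 1 ≠ 0 := by
    have : (n : ℝ) ≤ L := by exact_mod_cast hn
    linarith
  rw [alphaCoef, Nat.sub_self, hcast, poch_natCast, hasc, Nat.factorial_succ, Nat.factorial_succ]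
  simp only [pow_zero, poch, Finset.prod_range_zero]
  push_cast [Nat.cast_sub hn]
  field_simp

open Real in
lemma integral_Wentry {L n m : ℕ} (hmn : m ≤ n) (hn : n ≤ L) :
    ∫ x in (-1 : ℝ)..1, Wentry L x n m
      = if n = m then π / 2 * ((L : ℝ) + 1) ^ 2 / (((n : ℝ) + 1) * ((L : ℝ) - n + 1)) else 0 := by
  have hsum (x : ℝ) : Wentry L x n m = ∑ t ∈ Finset.range (m + 1),
      alphaCoef L m n t * (√(1 - x ^ 2) * (Chebyshev.U ℝ (n + m - 2 * t : ℕ)).eval x) := by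
    rw [Wentry, Finset.mul_sum]
    exact Finset.sum_congr rfl fun t _ => by rw [chebU_eq_eval_U]; ring
  have hcont (k : ℕ) : Continuous fun x : ℝ ↦ √(1 - x ^ 2) * (Chebyshev.U ℝ k).eval x := by
    fun_prop
  simp_rw [hsum]
  rw [intervalIntegral.integral_finsetSum
    fun t _ ↦ ((hcont _).const_mul _).intervalIntegrable _ _]
  simp_rw [intervalIntegral.integral_const_mul, integral_sqrt_one_sub_sq_mul_eval_U]
  rw [Finset.sum_eq_single_of_mem m (Finset.self_mem_range_succ m) fun t ht htm ↦ by
    rw [if_neg (by rw [Finset.mem_range] at ht; omega), mul_zero]]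
  by_cases hnm : n = m
  · subst hnm
    rw [if_pos (by omega), if_pos rfl, alphaCoef_diag hn]
    ring
  · rw [if_neg (by omega), if_neg hnm, mul_zero]

/-- The zeroth moment of the weight:
`(H_0)_{nm} = ∫_{-1}^1 W(x)_{nm} dx = δ_{nm} (π/2)(2ℓ+1)²/((n+1)(2ℓ-n+1))`. -/
theorem zeroth_moment (L : ℕ) (n m : Fin (L+1)) :
    (∫ x in (-1:ℝ)..1, Wmat L x n m) =
      if n = m then
        (Real.pi/2) * ((L:ℝ)+1)^2 / ((((n:ℕ):ℝ)+1) * ((L:ℝ)-((n:ℕ):ℝ)+1))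
      else 0 := by
  rcases le_or_gt (m : ℕ) n with hmn | hnm
  · simp only [Wmat, Matrix.of_apply, if_pos hmn]
    rw [integral_Wentry hmn (Nat.lt_succ_iff.mp n.isLt)]
    simp only [Fin.ext_iff]
  · simp only [Wmat, Matrix.of_apply, if_neg hnm.not_ge]
    rw [integral_Wentry hnm.le (Nat.lt_succ_iff.mp m.isLt), if_neg hnm.ne',
      if_neg (Fin.ne_of_lt hnm)]
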